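/- For every ν ≥ 0 and every s ∈ [0, j_ν] (where j_ν is the first positive zero of the Bessel function J_ν), one has ∫₀^s ((t^{-ν} J_ν(t))')² t^{2ν+1} dt ≤ ∫₀^s J_ν(t)² t dt. -/

import Mathlib

open MeasureTheory Real Set

/-- Bessel function of the first kind of order `ν`. -/
noncomputable def besselJ (ν x : ℝ) : ℝ :=
  ∑' k : ℕ, ((-1 : ℝ) ^ k / (Nat.factorial k * Real.Gamma (ν + k + 1))) *
    (x / 2) ^ (2 * (k : ℝ) + ν)

/-- First positive zero `j_ν` of the Bessel function `J_ν`. -/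
noncomputable def besselJZero (ν : ℝ) : ℝ :=
  sInf {x : ℝ | 0 < x ∧ besselJ ν x = 0}

/-!
Write `J_ν(x) = (x/2)^ν G_ν((x/2)²)` with the entire series `G_ν = besselSeries ν`. Termwise
differentiation of `G_ν` gives the classical identities `(t^{-ν} J_ν)' = -t^{-ν} J_{ν+1}` and
`(t^{ν+1} J_{ν+1})' = t^{ν+1} J_ν`. The first turns the left integrand into `t J_{ν+1}²`; the
product rule applied to `t J_ν J_{ν+1} = (t^{-ν} J_ν)(t^{ν+1} J_{ν+1})` then gives
`∫₀^s (J_ν² - J_{ν+1}²) t dt = s J_ν(s) J_{ν+1}(s)`. For `s ≤ j_ν` both factors are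
nonnegative: `J_ν ≥ 0` on `[0, j_ν]` by the intermediate value theorem since `G_ν(0) > 0`, so
`t^{ν+1} J_{ν+1}` is nondecreasing there and starts at `0`.
-/

open scoped Nat

theorem hasDerivAt_tsum_mul_pow {a : ℕ → ℝ}
    (ha : ∀ y : ℝ, Summable fun n => (n + 1) * a (n + 1) * y ^ n) (y : ℝ) :
    HasDerivAt (fun z => ∑' n, a n * z ^ n) (∑' n, (n + 1) * a (n + 1) * y ^ n) y := by
  set R := |y| + 1
  have hbound : ∀ n, ∀ z ∈ Metric.ball (0 : ℝ) R,
      ‖a n * (n * z ^ (n - 1))‖ ≤ |a n| * (n * R ^ (n - 1)) := by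
    intro n z hz
    rw [mem_ball_zero_iff] at hz
    rw [norm_mul, norm_mul, norm_pow, Real.norm_natCast, Real.norm_eq_abs]
    gcongr
  have hu : Summable fun n => |a n| * (n * R ^ (n - 1)) := by
    rw [← summable_nat_add_iff 1]
    refine ((ha R).abs).congr fun n => ?_
    rw [abs_mul, abs_mul, abs_pow, abs_of_pos (by positivity : (0 : ℝ) < R)]
    push_cast
    rw [abs_of_pos (by positivity : (0 : ℝ) < n + 1)]
    ring
  have hy : y ∈ Metric.ball (0 : ℝ) R := by
    rw [mem_ball_zero_iff, Real.norm_eq_abs]; linarith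
  have hderiv := hasDerivAt_tsum_of_isPreconnected hu Metric.isOpen_ball
    (convex_ball 0 R).isPreconnected (fun n z _ => (hasDerivAt_pow n z).const_mul (a n))
    hbound (Metric.mem_ball_self (by positivity))
    (summable_of_ne_finset_zero (s := {0}) fun n hn => by simp_all) hy
  refine hderiv.congr_deriv ?_
  rw [(hu.of_norm_bounded (hbound · y hy)).tsum_eq_zero_add]
  simp only [CharP.cast_eq_zero, zero_mul, mul_zero, zero_add, Nat.cast_add, Nat.cast_one,
    Nat.add_sub_cancel]
  exact tsum_congr fun n => by ring

noncomputable def besselCoeff (ν : ℝ) (k : ℕ) : ℝ :=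
  (-1) ^ k / (k ! * Gamma (ν + k + 1))

noncomputable def besselSeries (ν y : ℝ) : ℝ :=
  ∑' k, besselCoeff ν k * y ^ k

variable {ν : ℝ}

theorem factorial_mul_Gamma_le (hν : 0 ≤ ν) (k : ℕ) :
    k ! * Gamma (ν + 1) ≤ Gamma (ν + k + 1) := by
  induction k with
  | zero => simp
  | succ k ih =>
    rw [Nat.factorial_succ, Nat.cast_mul, Nat.cast_succ, mul_assoc,
      show ν + (k + 1 : ℝ) + 1 = ν + k + 1 + 1 by ring,
      Gamma_add_one (by positivity : 0 < ν + k + 1).ne']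
    gcongr
    linarith

theorem abs_besselCoeff_le (hν : 0 ≤ ν) (k : ℕ) :
    |besselCoeff ν k| ≤ (Gamma (ν + 1))⁻¹ * (k ! : ℝ)⁻¹ := by
  have hΓ : 0 < Gamma (ν + 1) := Gamma_pos_of_pos (by positivity)
  have hk : (1 : ℝ) ≤ k ! := mod_cast Nat.one_le_iff_ne_zero.2 (Nat.factorial_ne_zero k)
  rw [besselCoeff, abs_div, abs_pow, abs_neg, abs_one, one_pow, one_div, ← mul_inv,
    abs_of_pos (by positivity)]
  gcongr ?_⁻¹
  calc Gamma (ν + 1) * k ! ≤ Gamma (ν + k + 1) := by linarith [factorial_mul_Gamma_le hν k]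
    _ ≤ k ! * Gamma (ν + k + 1) := le_mul_of_one_le_left (by positivity) hk

theorem succ_mul_besselCoeff_succ (k : ℕ) :
    (k + 1) * besselCoeff ν (k + 1) = -besselCoeff (ν + 1) k := by
  rw [besselCoeff, besselCoeff, Nat.factorial_succ, pow_succ,
    show ν + ↑(k + 1) + 1 = ν + 1 + k + 1 by push_cast; ring]
  push_cast
  field_simp

theorem add_mul_besselCoeff_add_one (k : ℕ) :
    (ν + k + 1) * besselCoeff (ν + 1) k = besselCoeff ν k := by
  rcases eq_or_ne (ν + k + 1) 0 with h | h
  · rw [h, zero_mul, besselCoeff, h, Gamma_zero]; simp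
  · rw [besselCoeff, besselCoeff, show ν + 1 + k + 1 = ν + k + 1 + 1 by ring, Gamma_add_one h]
    field_simp

theorem summable_besselCoeff_mul_pow (hν : 0 ≤ ν) (y : ℝ) :
    Summable fun k => besselCoeff ν k * y ^ k := by
  refine .of_norm_bounded (((summable_pow_div_factorial |y|).mul_left (Gamma (ν + 1))⁻¹))
    fun k => ?_
  rw [norm_mul, norm_pow, Real.norm_eq_abs, Real.norm_eq_abs, div_eq_mul_inv]
  calc |besselCoeff ν k| * |y| ^ k ≤ (Gamma (ν + 1))⁻¹ * (k ! : ℝ)⁻¹ * |y| ^ k := by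
        gcongr; exact abs_besselCoeff_le hν k
    _ = _ := by ring

theorem hasDerivAt_besselSeries (hν : 0 ≤ ν) (y : ℝ) :
    HasDerivAt (besselSeries ν) (-besselSeries (ν + 1) y) y := by
  have hcoeff (z : ℝ) (n : ℕ) : (n + 1) * besselCoeff ν (n + 1) * z ^ n =
      -(besselCoeff (ν + 1) n * z ^ n) := by
    rw [succ_mul_besselCoeff_succ, neg_mul]
  have hderiv := hasDerivAt_tsum_mul_pow (a := besselCoeff ν) (fun z => by
    simpa only [hcoeff] using (summable_besselCoeff_mul_pow (by linarith) z).neg) y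
  simp only [hcoeff, tsum_neg] at hderiv
  exact hderiv

theorem continuous_besselSeries (hν : 0 ≤ ν) : Continuous (besselSeries ν) :=
  continuous_iff_continuousAt.2 fun y => (hasDerivAt_besselSeries hν y).continuousAt

theorem besselSeries_zero : besselSeries ν 0 = (Gamma (ν + 1))⁻¹ := by
  rw [besselSeries, tsum_eq_single 0 fun k hk => by simp [zero_pow hk]]
  simp [besselCoeff]

theorem besselSeries_eq_add_one_mul_sub (hν : 0 ≤ ν) (y : ℝ) :
    besselSeries ν y = (ν + 1) * besselSeries (ν + 1) y - y * besselSeries (ν + 2) y := by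
  have hs := summable_besselCoeff_mul_pow (by linarith : 0 ≤ ν + 1) y
  have hterm (k : ℕ) : (k + 1) * besselCoeff (ν + 1) (k + 1) * y ^ (k + 1) =
      -(y * (besselCoeff (ν + 2) k * y ^ k)) := by
    rw [succ_mul_besselCoeff_succ, show ν + 1 + 1 = ν + 2 by ring, pow_succ]; ring
  have hs' : Summable fun k : ℕ => k * besselCoeff (ν + 1) k * y ^ k := by
    rw [← summable_nat_add_iff 1]
    simpa only [Nat.cast_add, Nat.cast_one, hterm] using
      ((summable_besselCoeff_mul_pow (by linarith : 0 ≤ ν + 2) y).mul_left y).neg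
  have hshift :
      ∑' k : ℕ, k * besselCoeff (ν + 1) k * y ^ k = -(y * besselSeries (ν + 2) y) := by
    rw [hs'.tsum_eq_zero_add]
    simp only [Nat.cast_add, Nat.cast_one, hterm, tsum_neg, tsum_mul_left, CharP.cast_eq_zero,
      zero_mul, zero_add]
    rfl
  calc besselSeries ν y = ∑' k : ℕ, (ν + k + 1) * besselCoeff (ν + 1) k * y ^ k := by
        simp only [add_mul_besselCoeff_add_one]; rfl
    _ = (ν + 1) * besselSeries (ν + 1) y + ∑' k : ℕ, k * besselCoeff (ν + 1) k * y ^ k := by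
        rw [besselSeries, ← tsum_mul_left, ← (hs.mul_left _).tsum_add hs']
        exact tsum_congr fun k => by ring
    _ = _ := by rw [hshift]; ring

theorem hasDerivAt_rpow_mul_besselSeries_sq (hν : 0 ≤ ν) {v : ℝ} (hv : v ≠ 0) :
    HasDerivAt (fun w => w ^ (2 * ν + 2) * besselSeries (ν + 1) (w ^ 2))
      (2 * v ^ (2 * ν + 1) * besselSeries ν (v ^ 2)) v := by
  have hpow : HasDerivAt (fun w : ℝ => w ^ (2 * ν + 2)) ((2 * ν + 2) * v ^ (2 * ν + 1)) v := by
    simpa only [show 2 * ν + 2 - 1 = 2 * ν + 1 by ring] using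
      hasDerivAt_rpow_const (x := v) (p := 2 * ν + 2) (.inl hv)
  have hseries : HasDerivAt (fun w => besselSeries (ν + 1) (w ^ 2))
      (-besselSeries (ν + 2) (v ^ 2) * (2 * v)) v := by
    have := (hasDerivAt_besselSeries (ν := ν + 1) (by linarith) (v ^ 2)).comp v
      (hasDerivAt_pow 2 v)
    refine this.congr_deriv ?_
    norm_num [show ν + 1 + 1 = ν + 2 by ring]
  refine (hpow.mul hseries).congr_deriv ?_
  rw [besselSeries_eq_add_one_mul_sub hν, show 2 * ν + 2 = 2 * ν + 1 + 1 by ring,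
    rpow_add_one hv (2 * ν + 1)]
  ring

theorem besselJ_eq_rpow_mul (hν : 0 ≤ ν) {x : ℝ} (hx : 0 ≤ x) :
    besselJ ν x = (x / 2) ^ ν * besselSeries ν ((x / 2) ^ 2) := by
  rw [besselJ, besselSeries, ← tsum_mul_left]
  refine tsum_congr fun k => ?_
  rw [rpow_add_of_nonneg (by positivity) (by positivity) hν, rpow_mul_natCast (by positivity),
    rpow_two, besselCoeff]
  ring

theorem continuousOn_besselJ (hν : 0 ≤ ν) : ContinuousOn (besselJ ν) (Ici 0) := by
  have := continuous_besselSeries hν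
  exact (Continuous.continuousOn (by fun_prop)).congr fun x hx => besselJ_eq_rpow_mul hν hx

theorem rpow_neg_mul_besselJ (hν : 0 ≤ ν) {x : ℝ} (hx : 0 < x) :
    x ^ (-ν) * besselJ ν x = 2 ^ (-ν) * besselSeries ν ((x / 2) ^ 2) := by
  rw [besselJ_eq_rpow_mul hν hx.le, div_rpow hx.le zero_le_two, rpow_neg hx.le,
    rpow_neg zero_le_two]
  field_simp [(rpow_pos_of_pos hx ν).ne']

theorem hasDerivAt_rpow_neg_mul_besselJ (hν : 0 ≤ ν) {x : ℝ} (hx : 0 < x) :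
    HasDerivAt (fun u => u ^ (-ν) * besselJ ν u) (-(x ^ (-ν) * besselJ (ν + 1) x)) x := by
  have hseries : HasDerivAt (fun u => 2 ^ (-ν) * besselSeries ν ((u / 2) ^ 2))
      (2 ^ (-ν) * (-besselSeries (ν + 1) ((x / 2) ^ 2) * (x / 2))) x := by
    have := (hasDerivAt_besselSeries hν ((x / 2) ^ 2)).comp x
      (((hasDerivAt_id x).div_const 2).pow 2)
    refine (this.const_mul _).congr_deriv ?_
    simp only [id, Nat.cast_ofNat]
    ring
  refine (hseries.congr_of_eventuallyEq ?_).congr_deriv ?_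
  · filter_upwards [lt_mem_nhds hx] with u hu using rpow_neg_mul_besselJ hν hu
  · have h := rpow_neg_mul_besselJ (by linarith : 0 ≤ ν + 1) hx
    rw [show -ν = -(ν + 1) + 1 by ring, rpow_add_one hx.ne', rpow_add_one two_ne_zero]
    linear_combination x * h

theorem hasDerivAt_rpow_mul_besselJ_succ (hν : 0 ≤ ν) {x : ℝ} (hx : 0 < x) :
    HasDerivAt (fun u => u ^ (ν + 1) * besselJ (ν + 1) u) (x ^ (ν + 1) * besselJ ν x) x := by
  have hseries : HasDerivAt
      (fun u => 2 ^ (ν + 1) * ((u / 2) ^ (2 * ν + 2) * besselSeries (ν + 1) ((u / 2) ^ 2)))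
      (2 ^ (ν + 1) * (2 * (x / 2) ^ (2 * ν + 1) * besselSeries ν ((x / 2) ^ 2) * (1 / 2))) x :=
    (((hasDerivAt_rpow_mul_besselSeries_sq hν (by positivity)).comp x
      ((hasDerivAt_id x).div_const 2)).const_mul _)
  have hsplit {u : ℝ} (hu : 0 < u) : u ^ (ν + 1) = 2 ^ (ν + 1) * (u / 2) ^ (ν + 1) := by
    rw [← mul_rpow zero_le_two (by positivity)]; ring_nf
  refine (hseries.congr_of_eventuallyEq ?_).congr_deriv ?_
  · filter_upwards [lt_mem_nhds hx] with u hu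
    rw [besselJ_eq_rpow_mul (by linarith) hu.le, hsplit hu,
      show 2 * ν + 2 = (ν + 1) + (ν + 1) by ring, rpow_add (half_pos hu) (ν + 1) (ν + 1)]
    ring
  · rw [besselJ_eq_rpow_mul hν hx.le, hsplit hx, show 2 * ν + 1 = (ν + 1) + ν by ring,
      rpow_add (half_pos hx) (ν + 1) ν]
    ring

theorem hasDerivAt_mul_besselJ_mul_besselJ_succ (hν : 0 ≤ ν) {x : ℝ} (hx : 0 < x) :
    HasDerivAt (fun u => u * besselJ ν u * besselJ (ν + 1) u)
      (besselJ ν x ^ 2 * x - besselJ (ν + 1) x ^ 2 * x) x := by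
  have hpow {u : ℝ} (hu : 0 < u) : u ^ (-ν) * u ^ (ν + 1) = u := by
    rw [← rpow_add hu, neg_add_cancel_left, rpow_one]
  refine (((hasDerivAt_rpow_neg_mul_besselJ hν hx).fun_mul
    (hasDerivAt_rpow_mul_besselJ_succ hν hx)).congr_of_eventuallyEq ?_).congr_deriv ?_
  · filter_upwards [lt_mem_nhds hx] with u hu
    linear_combination -(besselJ ν u * besselJ (ν + 1) u * hpow hu)
  · linear_combination (besselJ ν x ^ 2 - besselJ (ν + 1) x ^ 2) * hpow hx

theorem intervalIntegrable_besselJ_sq_mul (hν : 0 ≤ ν) {s : ℝ} (hs : 0 ≤ s) :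
    IntervalIntegrable (fun t => besselJ ν t ^ 2 * t) volume 0 s := by
  refine ContinuousOn.intervalIntegrable ?_
  rw [uIcc_of_le hs]
  exact ((continuousOn_besselJ hν).mono Icc_subset_Ici_self).pow 2 |>.mul continuousOn_id

theorem integral_besselJ_sq_mul_sub (hν : 0 ≤ ν) {s : ℝ} (hs : 0 ≤ s) :
    ∫ t in (0 : ℝ)..s, (besselJ ν t ^ 2 * t - besselJ (ν + 1) t ^ 2 * t) =
      s * besselJ ν s * besselJ (ν + 1) s := by
  have hJ := (continuousOn_besselJ hν).mono (Icc_subset_Ici_self : Icc 0 s ⊆ Ici 0)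
  have hJ' := (continuousOn_besselJ (by linarith : 0 ≤ ν + 1)).mono
    (Icc_subset_Ici_self : Icc 0 s ⊆ Ici 0)
  rw [intervalIntegral.integral_eq_sub_of_hasDerivAt_of_le hs
    ((continuousOn_id.mul hJ).mul hJ')
    (fun x hx => hasDerivAt_mul_besselJ_mul_besselJ_succ hν hx.1)
    ((intervalIntegrable_besselJ_sq_mul hν hs).sub
      (intervalIntegrable_besselJ_sq_mul (by linarith) hs))]
  simp

theorem besselSeries_nonneg_of_le_besselJZero (hν : 0 ≤ ν) {t : ℝ} (ht0 : 0 ≤ t)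
    (ht : t ≤ besselJZero ν) : 0 ≤ besselSeries ν ((t / 2) ^ 2) := by
  by_contra! hneg
  have hcont := continuous_besselSeries hν
  have hpos : 0 < besselSeries ν ((0 / 2) ^ 2) := by
    simpa [besselSeries_zero] using Gamma_pos_of_pos (by linarith : 0 < ν + 1)
  obtain ⟨x, hx, hx_zero⟩ := intermediate_value_Icc' ht0
    (f := fun u => besselSeries ν ((u / 2) ^ 2)) (by fun_prop) ⟨hneg.le, hpos.le⟩
  have hx0 : 0 < x := hx.1.lt_of_ne (by rintro rfl; exact hpos.ne' hx_zero)
  have hxt : x < t := hx.2.lt_of_ne (by rintro rfl; exact hneg.ne hx_zero)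
  have hJ : besselJ ν x = 0 := by
    rw [besselJ_eq_rpow_mul hν hx0.le, show besselSeries ν ((x / 2) ^ 2) = 0 from hx_zero,
      mul_zero]
  have hbdd : BddBelow {y : ℝ | 0 < y ∧ besselJ ν y = 0} := ⟨0, fun y hy => hy.1.le⟩
  exact (csInf_le hbdd ⟨hx0, hJ⟩).not_gt (hxt.trans_le ht)

theorem besselJ_nonneg_of_le_besselJZero (hν : 0 ≤ ν) {t : ℝ} (ht0 : 0 ≤ t)
    (ht : t ≤ besselJZero ν) : 0 ≤ besselJ ν t := by
  rw [besselJ_eq_rpow_mul hν ht0]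
  exact mul_nonneg (by positivity) (besselSeries_nonneg_of_le_besselJZero hν ht0 ht)

theorem besselJ_succ_nonneg_of_le_besselJZero (hν : 0 ≤ ν) {s : ℝ} (hs0 : 0 < s)
    (hs : s ≤ besselJZero ν) : 0 ≤ besselJ (ν + 1) s := by
  have hmono : MonotoneOn (fun u => u ^ (ν + 1) * besselJ (ν + 1) u) (Icc 0 s) := by
    refine monotoneOn_of_hasDerivWithinAt_nonneg (f' := fun x => x ^ (ν + 1) * besselJ ν x)
      (convex_Icc 0 s)
      ((continuous_rpow_const (by linarith)).continuousOn.mul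
        ((continuousOn_besselJ (by linarith)).mono Icc_subset_Ici_self))
      (fun x hx => ?_) (fun x hx => ?_)
    all_goals rw [interior_Icc] at hx
    · exact (hasDerivAt_rpow_mul_besselJ_succ hν hx.1).hasDerivWithinAt
    · exact mul_nonneg (rpow_nonneg hx.1.le _) (besselJ_nonneg_of_le_besselJZero hν hx.1.le
        (hx.2.le.trans hs))
  have h := hmono (left_mem_Icc.2 hs0.le) (right_mem_Icc.2 hs0.le) hs0.le
  dsimp only at h
  rw [zero_rpow (by linarith), zero_mul] at h
  exact (mul_nonneg_iff_of_pos_left (rpow_pos_of_pos hs0 _)).1 h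

theorem deriv_rpow_neg_mul_besselJ_sq_mul (hν : 0 ≤ ν) {t : ℝ} (ht : 0 < t) :
    deriv (fun u => u ^ (-ν) * besselJ ν u) t ^ 2 * t ^ (2 * ν + 1) =
      besselJ (ν + 1) t ^ 2 * t := by
  have hpow : (t ^ (-ν)) ^ 2 * t ^ (2 * ν + 1) = t := by
    rw [← rpow_natCast, ← rpow_mul ht.le, ← rpow_add ht,
      show -ν * (2 : ℕ) + (2 * ν + 1) = 1 by push_cast; ring, rpow_one]
  rw [(hasDerivAt_rpow_neg_mul_besselJ hν ht).deriv]
  linear_combination besselJ (ν + 1) t ^ 2 * hpow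

theorem bessel_derivative_integral_inequality (ν : ℝ) (hν : 0 ≤ ν)
    (s : ℝ) (hs : s ∈ Set.Icc 0 (besselJZero ν)) :
    ∫ t in (0 : ℝ)..s,
        (deriv (fun u : ℝ => u ^ (-ν) * besselJ ν u) t) ^ 2 * t ^ (2 * ν + 1)
      ≤ ∫ t in (0 : ℝ)..s, (besselJ ν t) ^ 2 * t := by
  obtain ⟨hs0, hsj⟩ := hs
  have hlhs : ∫ t in (0 : ℝ)..s,
      (deriv (fun u : ℝ => u ^ (-ν) * besselJ ν u) t) ^ 2 * t ^ (2 * ν + 1) =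
      ∫ t in (0 : ℝ)..s, besselJ (ν + 1) t ^ 2 * t := by
    refine intervalIntegral.integral_congr_ae (ae_of_all _ fun t ht => ?_)
    rw [uIoc_of_le hs0] at ht
    exact deriv_rpow_neg_mul_besselJ_sq_mul hν ht.1
  have hdiff := integral_besselJ_sq_mul_sub hν hs0
  rw [intervalIntegral.integral_sub (intervalIntegrable_besselJ_sq_mul hν hs0)
    (intervalIntegrable_besselJ_sq_mul (by linarith) hs0)] at hdiff
  have hboundary : 0 ≤ s * besselJ ν s * besselJ (ν + 1) s := by
    rcases hs0.eq_or_lt with rfl | hs_pos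
    · simp
    · exact mul_nonneg (mul_nonneg hs0 (besselJ_nonneg_of_le_besselJZero hν hs0 hsj))
        (besselJ_succ_nonneg_of_le_besselJZero hν hs_pos hsj)
  linarith
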